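/- arXiv:1706.02630 — 3 statements merged into one kernel-verified Lean document; each statement's English description precedes it below -/
import Mathlib

section
/- Let C be a symmetric monoidal closed category with all small products. For families A : X → C, B : Y → C, D : Z → C of objects of C, there is a bijection between (i) pairs consisting of a function f₀ : X × Y → Z together with, for each x : X and y : Y, a morphism A x ⊗ B y ⟶ D (f₀ (x, y)) in C, and (ii) pairs consisting of a function g₀ : X → (Y → Z) together with, for each x : X, a morphism A x ⟶ ∏ y : Y, (B y ⊸ D (g₀ x y)) in C, where ⊸ denotes the internal hom of C and ∏ the categorical product. -/
/-!
Both sides are fibred over the same data once `X × Y → Z` is curried to `X → Y → Z`. Fibrewise,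
a family of maps `A ⊗ B y ⟶ E y` is a family of maps `A ⟶ (B y ⊸ E y)` by the tensor–hom
adjunction (after a braiding, since `ihom B` is right adjoint to `B ⊗ -`), and such a family is a
single map into the product by its universal property.
-/

open CategoryTheory CategoryTheory.Limits CategoryTheory.MonoidalCategory

universe w v u

noncomputable section

namespace CategoryTheory

variable {C : Type*} [Category C]

def Limits.Pi.liftEquiv {β : Type*} (f : β → C) [HasProduct f] (P : C) :
    (∀ b, P ⟶ f b) ≃ (P ⟶ ∏ᶜ f) where
  toFun := Pi.lift
  invFun g b := g ≫ Pi.π f b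
  left_inv p := funext (Pi.lift_π p)
  right_inv _ := Pi.hom_ext _ _ fun b => Pi.lift_π _ b

namespace MonoidalClosed

variable [MonoidalCategory C] [BraidedCategory C] [MonoidalClosed C]

def curryRightEquiv (A B E : C) : (A ⊗ B ⟶ E) ≃ (A ⟶ (ihom B).obj E) :=
  ((β_ A B).homCongr (Iso.refl E)).trans ((ihom.adjunction B).homEquiv A E)

def tensorFamilyHomEquiv {Y : Type*} (A : C) (B E : Y → C)
    [HasProduct fun y => (ihom (B y)).obj (E y)] :
    (∀ y, A ⊗ B y ⟶ E y) ≃ (A ⟶ ∏ᶜ fun y => (ihom (B y)).obj (E y)) :=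
  (Equiv.piCongrRight fun y => curryRightEquiv A (B y) (E y)).trans (Pi.liftEquiv _ A)

end MonoidalClosed

end CategoryTheory

end

/-- Let `C` be a symmetric monoidal closed category with all small products.
For families `A : X → C`, `B : Y → C`, `D : Z → C`, there is a bijection
between (i) pairs of a function `f₀ : X × Y → Z` together with morphisms
`A x ⊗ B y ⟶ D (f₀ (x, y))`, and (ii) pairs of a function `g₀ : X → (Y → Z)`
together with morphisms `A x ⟶ ∏ y, (B y ⊸ D (g₀ x y))`. -/
theorem fam_tensor_hom_currying_bijection
    (C : Type u) [Category.{v} C] [MonoidalCategory C] [SymmetricCategory C]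
    [MonoidalClosed C] [HasProducts.{w} C]
    {X Y Z : Type w} (A : X → C) (B : Y → C) (D : Z → C) :
    Nonempty
      ((Σ f₀ : X × Y → Z, ∀ (x : X) (y : Y), (A x ⊗ B y ⟶ D (f₀ (x, y)))) ≃
       (Σ g₀ : X → Y → Z, ∀ x : X,
          (A x ⟶ ∏ᶜ fun y : Y => (ihom (B y)).obj (D (g₀ x y))))) :=
  ⟨Equiv.sigmaCongr (Equiv.curry X Y Z) fun f₀ => Equiv.piCongrRight fun x =>
    MonoidalClosed.tensorFamilyHomEquiv (A x) B fun y => D (f₀ (x, y))⟩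
end

section
/- Let C be a monoidal category. The functor p : Type ⥤ Fam(C), sending X to (X, fun _ => 𝟙_C), has a right adjoint ♭ : Fam(C) ⥤ Type, sending (Y, B) to Σ y : Y, (𝟙_C ⟶ B y); that is, there is a bijection, natural in X and (Y, B), between morphisms p X ⟶ (Y, B) in Fam(C) and functions X → Σ y : Y, (𝟙_C ⟶ B y). -/
open CategoryTheory CategoryTheory.Limits

universe w v u

/-- The category `Fam(C)` of families of objects of `C`: an object is a pair
`(X, A)` of a (index) type `X` and a family `A : X → C` of objects of `C`. -/
structure Fam (C : Type u) [CategoryTheory.Category.{v} C] : Type (max (w + 1) u) where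
  /-- the index type -/
  idx : Type w
  /-- the family of fibers -/
  fib : idx → C

namespace Fam

variable {C : Type u} [CategoryTheory.Category.{v} C]

/-- A morphism `(X, A) ⟶ (Y, B)` in `Fam(C)` is a pair of a function
`f₀ : X → Y` together with morphisms `f x : A x ⟶ B (f₀ x)` of `C`. -/
instance : CategoryTheory.Category.{max w v} (Fam.{w} C) where
  Hom A B := Σ f₀ : A.idx → B.idx, ∀ x, A.fib x ⟶ B.fib (f₀ x)
  id A := ⟨fun x => x, fun x => 𝟙 (A.fib x)⟩
  comp f g := ⟨fun x => g.1 (f.1 x), fun x => f.2 x ≫ g.2 (f.1 x)⟩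
  id_comp f := congrArg (Sigma.mk f.1) (funext fun x => CategoryTheory.Category.id_comp (f.2 x))
  comp_id f := congrArg (Sigma.mk f.1) (funext fun x => CategoryTheory.Category.comp_id (f.2 x))
  assoc _ _ _ := congrArg (Sigma.mk _) (funext fun _ => CategoryTheory.Category.assoc _ _ _)

end Fam

namespace Fam

open MonoidalCategory

variable (C : Type u) [Category.{v} C] [MonoidalCategory C]

/-- The functor `p : Type ⥤ Fam(C)` sending `X` to the constantly-unit family
`(X, fun _ => 𝟙_ C)`. -/
def p : Type v ⥤ Fam.{v} C where
  obj X := ⟨X, fun _ => 𝟙_ C⟩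
  map f := ⟨f, fun _ => 𝟙 (𝟙_ C)⟩
  map_id _ := rfl
  map_comp _ _ := congrArg (Sigma.mk _) (funext fun _ => (Category.id_comp _).symm)

/-- The functor `♭ : Fam(C) ⥤ Type` sending `(Y, B)` to `Σ y : Y, (𝟙_C ⟶ B y)`. -/
def flat : Fam.{v} C ⥤ Type v where
  obj A := Σ x : A.idx, (𝟙_ C ⟶ A.fib x)
  map f := TypeCat.ofHom fun s => ⟨f.1 s.1, s.2 ≫ f.2 s.1⟩
  map_id _ := congrArg TypeCat.ofHom <| funext fun s => congrArg (Sigma.mk s.1) (Category.comp_id s.2)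
  map_comp _ _ := congrArg TypeCat.ofHom <| funext fun _ => congrArg (Sigma.mk _) (Category.assoc _ _ _).symm

end Fam

namespace Fam

variable (C : Type u) [Category.{v} C] [MonoidalCategory C]

/-- Both sides are the same data up to currying a Σ-type: `(f₀, f)` with `f x : 𝟙_C ⟶ B (f₀ x)`
corresponds to `x ↦ ⟨f₀ x, f x⟩`. -/
def pHomEquiv (X : Type v) (A : Fam.{v} C) : ((p C).obj X ⟶ A) ≃ (X ⟶ (flat C).obj A) where
  toFun f := TypeCat.ofHom fun x => ⟨f.1 x, f.2 x⟩
  invFun g := ⟨fun x => (g x).1, fun x => (g x).2⟩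
  left_inv _ := rfl
  right_inv _ := rfl

def pAdjFlat : p C ⊣ flat C :=
  Adjunction.mkOfHomEquiv
    { homEquiv := pHomEquiv C
      homEquiv_naturality_left_symm := fun _ _ =>
        congrArg (Sigma.mk _) (funext fun _ => (Category.id_comp _).symm)
      homEquiv_naturality_right := fun _ _ => rfl }

end Fam

/-- For a monoidal category `C`, the functor `p : Type ⥤ Fam(C)`,
`X ↦ (X, fun _ => 𝟙_C)`, has as right adjoint the functor `♭ : Fam(C) ⥤ Type`,
`(Y, B) ↦ Σ y : Y, (𝟙_C ⟶ B y)`: there is a bijection, natural in `X` and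
`(Y, B)`, between morphisms `p X ⟶ (Y, B)` and functions `X → Σ y, (𝟙_C ⟶ B y)`. -/
theorem fam_p_adj_flat (C : Type u) [Category.{v} C] [MonoidalCategory C] :
    Nonempty (Fam.p C ⊣ Fam.flat C) :=
  ⟨Fam.pAdjFlat C⟩
end

section
/- Let C be a symmetric monoidal closed category with all small products. For every object (Y, B) of Fam(C), the functor − ⊗ (Y, B) : Fam(C) ⥤ Fam(C) has a right adjoint, given on objects by (Z, D) ↦ (Y → Z, fun g => ∏ y : Y, (B y ⊸ D (g y))); hence Fam(C), with the tensor (X, A) ⊗ (Y, B) := (X × Y, fun (x, y) => A x ⊗ B y) and unit (PUnit, fun _ => 𝟙_C), is symmetric monoidal closed. -/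
/-!
A morphism of `Fam(C)` is an index map together with morphisms of `C` over it, and the
structure maps of the fiberwise tensor lie over the evident bijections of index types; so every
monoidal, braided and symmetric axiom in `Fam(C)` reduces fiber by fiber to the same axiom in `C`.

For closedness, a morphism `(X, A) ⊗ (Y, B) ⟶ (Z, D)` is a map `f₀ : X × Y → Z` with morphisms
`A x ⊗ B y ⟶ D (f₀ (x, y))`. Currying `f₀`, transposing each fiber along `− ⊗ B y ⊣ (B y ⊸ −)`
(this uses the braiding of `C`) and collecting the `y`-components into a product gives exactly a
morphism `(X, A) ⟶ (Y → Z, fun g => ∏ y, (B y ⊸ D (g y)))`, naturally in both variables.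
-/

open CategoryTheory CategoryTheory.Limits

universe w v u

namespace Fam

open MonoidalCategory

variable {C : Type u} [Category.{v} C] [MonoidalCategory C]

/-- The fiberwise tensor product on `Fam(C)`:
`(X, A) ⊗ (Y, B) := (X × Y, fun (x, y) => A x ⊗ B y)`. -/
def tensorObj' (A B : Fam.{w} C) : Fam.{w} C :=
  ⟨A.idx × B.idx, fun p => A.fib p.1 ⊗ B.fib p.2⟩

/-- The fiberwise tensor product of morphisms of `Fam(C)`. -/
def tensorHom' {A A' B B' : Fam.{w} C} (f : A ⟶ A') (g : B ⟶ B') :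
    tensorObj' A B ⟶ tensorObj' A' B' :=
  ⟨fun p => (f.1 p.1, g.1 p.2), fun p => f.2 p.1 ⊗ₘ g.2 p.2⟩

/-- The tensor unit of `Fam(C)`: `(PUnit, fun _ => 𝟙_C)`. -/
def unitObj : Fam.{w} C := ⟨PUnit, fun _ => 𝟙_ C⟩

/-- The associator of `Fam(C)`: the evident bijection of product types on
indices, and the associator of `C` on fibers. -/
def assocHom (A B D : Fam.{w} C) :
    tensorObj' (tensorObj' A B) D ⟶ tensorObj' A (tensorObj' B D) :=
  ⟨fun p => (p.1.1, (p.1.2, p.2)), fun _ => (α_ _ _ _).hom⟩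

/-- The left unitor of `Fam(C)`: the evident bijection on indices, and the
left unitor of `C` on fibers. -/
def leftUnitorHom (A : Fam.{w} C) : tensorObj' unitObj A ⟶ A :=
  ⟨fun p => p.2, fun _ => (λ_ _).hom⟩

/-- The right unitor of `Fam(C)`: the evident bijection on indices, and the
right unitor of `C` on fibers. -/
def rightUnitorHom (A : Fam.{w} C) : tensorObj' A unitObj ⟶ A :=
  ⟨fun p => p.1, fun _ => (ρ_ _).hom⟩

/-- The braiding of `Fam(C)`: the swap bijection of product types on indices,
and the braiding of `C` on fibers. -/
def braidHom [SymmetricCategory C] (A B : Fam.{w} C) :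
    tensorObj' A B ⟶ tensorObj' B A :=
  ⟨fun p => (p.2, p.1), fun _ => (β_ _ _).hom⟩

end Fam

namespace Fam

open MonoidalCategory

variable {C : Type u} [Category.{v} C] [MonoidalCategory C]

/-- The functor `− ⊗ (Y, B) : Fam(C) ⥤ Fam(C)` for the fiberwise tensor. -/
def tensorRight' (B : Fam.{w} C) : Fam.{w} C ⥤ Fam.{w} C where
  obj A := tensorObj' A B
  map f := tensorHom' f (𝟙 B)
  map_id A := congrArg (Sigma.mk _)
    (funext fun _ => MonoidalCategory.id_tensorHom_id _ _)
  map_comp f g := congrArg (Sigma.mk _)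
    (funext fun p => by
      show ((f.2 p.1 ≫ g.2 (f.1 p.1)) ⊗ₘ 𝟙 (B.fib p.2)) =
        (f.2 p.1 ⊗ₘ 𝟙 (B.fib p.2)) ≫ (g.2 (f.1 p.1) ⊗ₘ 𝟙 (B.fib p.2))
      rw [MonoidalCategory.tensorHom_comp_tensorHom, Category.comp_id])

@[simp]
theorem id_fst (A : Fam.{w} C) (x : A.idx) : (𝟙 A : A ⟶ A).1 x = x := rfl

@[simp]
theorem id_snd (A : Fam.{w} C) (x : A.idx) :
    (𝟙 A : A ⟶ A).2 x = 𝟙 (A.fib x) := rfl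

@[simp]
theorem comp_fst {A B D : Fam.{w} C} (f : A ⟶ B) (g : B ⟶ D) (x : A.idx) :
    (f ≫ g).1 x = g.1 (f.1 x) := rfl

@[simp]
theorem comp_snd {A B D : Fam.{w} C} (f : A ⟶ B) (g : B ⟶ D) (x : A.idx) :
    (f ≫ g).2 x = f.2 x ≫ g.2 (f.1 x) := rfl

variable [MonoidalClosed C] [HasProducts.{w} C]

/-- The candidate internal hom `(Y, B) ⊸ (Z, D)` in `Fam(C)`:
`(Y → Z, fun g => ∏ y : Y, (B y ⊸ D (g y)))`. -/
noncomputable def ihomObj (B D : Fam.{w} C) : Fam.{w} C :=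
  ⟨B.idx → D.idx, fun g => ∏ᶜ fun y => (ihom (B.fib y)).obj (D.fib (g y))⟩

/-- The functor `(Y, B) ⊸ − : Fam(C) ⥤ Fam(C)`. -/
noncomputable def ihomFunctor (B : Fam.{w} C) : Fam.{w} C ⥤ Fam.{w} C where
  obj D := ihomObj B D
  map h := ⟨fun g y => h.1 (g y),
    fun g => Limits.Pi.map fun y => (ihom (B.fib y)).map (h.2 (g y))⟩
  map_id D := congrArg (Sigma.mk _) (funext fun g => by
    ext j
    simp
    exact (Category.id_comp _).symm)
  map_comp h k := congrArg (Sigma.mk _) (funext fun g => by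
    ext j
    simp
    erw [Category.assoc, Limits.Pi.map_π, Limits.Pi.map_π_assoc])

end Fam

open MonoidalCategory in
/-- The assertion that a given monoidal structure on `Fam(C)` has the
fiberwise tensor and unit. -/
def FamMonoidalTensorSpec (C : Type u) [Category.{v} C] [MonoidalCategory C]
    [MonoidalCategory (Fam.{w} C)] : Prop :=
  (∀ A B : Fam.{w} C, A ⊗ B = Fam.tensorObj' A B) ∧
  (𝟙_ (Fam.{w} C) = Fam.unitObj)

namespace CategoryTheory.ihom

open MonoidalCategory

variable {C : Type u} [Category.{v} C] [MonoidalCategory C] [BraidedCategory C]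

noncomputable def tensorRightAdjunction (b : C) [Closed b] : tensorRight b ⊣ ihom b :=
  (ihom.adjunction b).ofNatIsoLeft (BraidedCategory.tensorLeftIsoTensorRight b)

variable [MonoidalClosed C] [HasProducts.{w} C]

noncomputable def piHomEquiv {Y : Type w} (a : C) (b d : Y → C) :
    (∀ y, a ⊗ b y ⟶ d y) ≃ (a ⟶ ∏ᶜ fun y => (ihom (b y)).obj (d y)) where
  toFun f := Pi.lift fun y => (tensorRightAdjunction (b y)).homEquiv _ _ (f y)
  invFun g y := ((tensorRightAdjunction (b y)).homEquiv _ _).symm (g ≫ Pi.π _ y)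
  left_inv f := funext fun y => by simp
  right_inv g := Pi.hom_ext _ _ fun y => by simp

theorem piHomEquiv_symm_comp {Y : Type w} {a a' : C} {b d : Y → C} (f : a' ⟶ a)
    (g : a ⟶ ∏ᶜ fun y => (ihom (b y)).obj (d y)) (y : Y) :
    (piHomEquiv a' b d).symm (f ≫ g) y = f ▷ b y ≫ (piHomEquiv a b d).symm g y := by
  dsimp only [piHomEquiv, Equiv.coe_fn_symm_mk]
  rw [Category.assoc, Adjunction.homEquiv_naturality_left_symm]
  rfl

theorem piHomEquiv_comp {Y : Type w} {a : C} {b d d' : Y → C} (f : ∀ y, a ⊗ b y ⟶ d y)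
    (h : ∀ y, d y ⟶ d' y) :
    piHomEquiv a b d' (fun y => f y ≫ h y) =
      piHomEquiv a b d f ≫ Limits.Pi.map fun y => (ihom (b y)).map (h y) :=
  Pi.hom_ext _ _ fun y => by
    simpa [piHomEquiv] using (tensorRightAdjunction (b y)).homEquiv_naturality_right (f y) (h y)

end CategoryTheory.ihom

namespace Fam

open MonoidalCategory

variable {C : Type u} [Category.{v} C]

theorem hom_ext {A B : Fam.{w} C} {f g : A ⟶ B} (h₀ : f.1 = g.1)
    (h : ∀ x, f.2 x ≍ g.2 x) : f = g := by
  obtain ⟨f₀, f⟩ := f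
  obtain ⟨g₀, g⟩ := g
  subst h₀
  exact congrArg _ (funext fun x => eq_of_heq (h x))

variable [MonoidalCategory C]

instance monoidalCategory : MonoidalCategory (Fam.{w} C) where
  tensorObj := tensorObj'
  tensorHom := tensorHom'
  whiskerLeft A _ _ g := ⟨fun p => (p.1, g.1 p.2), fun p => A.fib p.1 ◁ g.2 p.2⟩
  whiskerRight f B := ⟨fun p => (f.1 p.1, p.2), fun p => f.2 p.1 ▷ B.fib p.2⟩
  tensorUnit := unitObj
  associator A B D :=
    { hom := assocHom A B D
      inv := ⟨fun p => ((p.1, p.2.1), p.2.2), fun _ => (α_ _ _ _).inv⟩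
      hom_inv_id := hom_ext rfl fun _ => heq_of_eq ((α_ _ _ _).hom_inv_id)
      inv_hom_id := hom_ext rfl fun _ => heq_of_eq ((α_ _ _ _).inv_hom_id) }
  leftUnitor A :=
    { hom := leftUnitorHom A
      inv := ⟨fun x => (⟨⟩, x), fun _ => (λ_ _).inv⟩
      hom_inv_id := hom_ext rfl fun _ => heq_of_eq ((λ_ _).hom_inv_id)
      inv_hom_id := hom_ext rfl fun _ => heq_of_eq ((λ_ _).inv_hom_id) }
  rightUnitor A :=
    { hom := rightUnitorHom A
      inv := ⟨fun x => (x, ⟨⟩), fun _ => (ρ_ _).inv⟩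
      hom_inv_id := hom_ext rfl fun _ => heq_of_eq ((ρ_ _).hom_inv_id)
      inv_hom_id := hom_ext rfl fun _ => heq_of_eq ((ρ_ _).inv_hom_id) }
  tensorHom_def _ _ := hom_ext rfl fun _ => heq_of_eq (tensorHom_def _ _)
  id_tensorHom_id _ _ := hom_ext rfl fun _ => heq_of_eq (id_tensorHom_id _ _)
  tensorHom_comp_tensorHom _ _ _ _ :=
    hom_ext rfl fun _ => heq_of_eq (tensorHom_comp_tensorHom _ _ _ _)
  whiskerLeft_id _ _ := hom_ext rfl fun _ => heq_of_eq (whiskerLeft_id _ _)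
  id_whiskerRight _ _ := hom_ext rfl fun _ => heq_of_eq (id_whiskerRight _ _)
  associator_naturality _ _ _ := hom_ext rfl fun _ => heq_of_eq (associator_naturality _ _ _)
  leftUnitor_naturality _ := hom_ext rfl fun _ => heq_of_eq (leftUnitor_naturality _)
  rightUnitor_naturality _ := hom_ext rfl fun _ => heq_of_eq (rightUnitor_naturality _)
  pentagon _ _ _ _ := hom_ext rfl fun _ => heq_of_eq (pentagon _ _ _ _)
  triangle _ _ := hom_ext rfl fun _ => heq_of_eq (triangle _ _)

instance braidedCategory [BraidedCategory C] : BraidedCategory (Fam.{w} C) where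
  braiding _ _ :=
    { hom := ⟨fun p => (p.2, p.1), fun _ => (β_ _ _).hom⟩
      inv := ⟨fun p => (p.2, p.1), fun _ => (β_ _ _).inv⟩
      hom_inv_id := hom_ext rfl fun _ => heq_of_eq ((β_ _ _).hom_inv_id)
      inv_hom_id := hom_ext rfl fun _ => heq_of_eq ((β_ _ _).inv_hom_id) }
  braiding_naturality_right _ _ _ _ :=
    hom_ext rfl fun _ => heq_of_eq (BraidedCategory.braiding_naturality_right _ _)
  braiding_naturality_left _ _ :=
    hom_ext rfl fun _ => heq_of_eq (BraidedCategory.braiding_naturality_left _ _)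
  hexagon_forward _ _ _ := hom_ext rfl fun _ => heq_of_eq (BraidedCategory.hexagon_forward _ _ _)
  hexagon_reverse _ _ _ := hom_ext rfl fun _ => heq_of_eq (BraidedCategory.hexagon_reverse _ _ _)

instance symmetricCategory [SymmetricCategory C] : SymmetricCategory (Fam.{w} C) where
  symmetry _ _ := hom_ext rfl fun _ => heq_of_eq (SymmetricCategory.symmetry _ _)

def tensorRight'IsoTensorRight (B : Fam.{w} C) : tensorRight' B ≅ tensorRight B :=
  NatIso.ofComponents (fun _ => Iso.refl _) fun _ =>
    hom_ext rfl fun _ => heq_of_eq <|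
      (Category.comp_id _).trans ((tensorHom_id _ _).trans (Category.id_comp _).symm)

section Closed

variable [BraidedCategory C] [MonoidalClosed C] [HasProducts.{w} C]

noncomputable def tensorRightHomEquiv (A B D : Fam.{w} C) :
    (A ⊗ B ⟶ D) ≃ (A ⟶ ihomObj B D) where
  toFun f := ⟨fun x y => f.1 (x, y), fun x => ihom.piHomEquiv _ _ _ fun y => f.2 (x, y)⟩
  invFun g := ⟨fun p => g.1 p.1 p.2, fun p => (ihom.piHomEquiv _ _ _).symm (g.2 p.1) p.2⟩
  left_inv _ := hom_ext rfl fun p =>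
    heq_of_eq (congrFun ((ihom.piHomEquiv _ _ _).symm_apply_apply _) p.2)
  right_inv g := hom_ext rfl fun x => heq_of_eq ((ihom.piHomEquiv _ _ _).apply_symm_apply (g.2 x))

noncomputable def tensorRightAdjunction (B : Fam.{w} C) : tensorRight B ⊣ ihomFunctor B :=
  Adjunction.mkOfHomEquiv
    { homEquiv A D := tensorRightHomEquiv A B D
      homEquiv_naturality_left_symm _ _ :=
        hom_ext rfl fun _ => heq_of_eq (ihom.piHomEquiv_symm_comp _ _ _)
      homEquiv_naturality_right _ _ := hom_ext rfl fun _ => heq_of_eq (ihom.piHomEquiv_comp _ _) }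

noncomputable instance monoidalClosed : MonoidalClosed (Fam.{w} C) where
  closed B :=
    { rightAdj := ihomFunctor B
      adj :=
        (tensorRightAdjunction B).ofNatIsoLeft (BraidedCategory.tensorLeftIsoTensorRight B).symm }

end Closed

end Fam

/-- Let `C` be a symmetric monoidal closed category with all small products.
For every object `(Y, B)` of `Fam(C)`, the functor `− ⊗ (Y, B)` has a right
adjoint, given on objects by `(Z, D) ↦ (Y → Z, fun g => ∏ y, (B y ⊸ D (g y)))`;
hence `Fam(C)`, with the fiberwise tensor and unit `(PUnit, fun _ => 𝟙_C)`, is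
symmetric monoidal closed. -/
theorem fam_monoidalClosed (C : Type u) [Category.{v} C] [MonoidalCategory C]
    [SymmetricCategory C] [MonoidalClosed C] [HasProducts.{w} C] :
    (∀ B : Fam.{w} C, Nonempty (Fam.tensorRight' B ⊣ Fam.ihomFunctor B)) ∧
    ∃ (M : MonoidalCategory (Fam.{w} C)) (_ : @SymmetricCategory _ _ M)
      (_ : @MonoidalClosed _ _ M), @FamMonoidalTensorSpec C _ _ M :=
  ⟨fun B => ⟨(Fam.tensorRightAdjunction B).ofNatIsoLeft (Fam.tensorRight'IsoTensorRight B).symm⟩,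
    Fam.monoidalCategory, Fam.symmetricCategory, Fam.monoidalClosed, fun _ _ => rfl, rfl⟩
end
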